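/- arXiv:1608.08028 — 9 statements merged into one kernel-verified Lean document; each statement's English description precedes it below -/
import Mathlib

section
/- Suppose the pair (ODE system, Dyn) is structurally dynamically stable. Then for each i : Fin D the structural equation of variable i is well-defined and depends only on the parents of i: if ζ, ζ' : Fin D → ℝ → ℝ satisfy ζ j ∈ Dyn j and ζ' j ∈ Dyn j for all j ≠ i, and ζ j = ζ' j for all j ∈ pa i, and if η and η' are the unique asymptotic solutions (from the definition of dynamic stability) of the systems intervened with ({i}ᶜ, ζ) and ({i}ᶜ, ζ') respectively, then η i = η' i; moreover η i ∈ Dyn i. -/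
open Filter

/-- The `i`-th differential equation predicate `sat` is local to the parents `pa`:
it only depends on the components of the full trajectory that are parents of `i`. -/
def LocalToParents {D : ℕ} (pa : Fin D → Set (Fin D))
    (sat : Fin D → (ℝ → ℝ) → (Fin D → ℝ → ℝ) → Prop) : Prop :=
  ∀ (i : Fin D) (x : ℝ → ℝ) (X X' : Fin D → ℝ → ℝ),
    (∀ j ∈ pa i, X j = X' j) → (sat i x X ↔ sat i x X')

/-- `X` is a solution of the ODE system intervened with `(S, ζ)`. -/
def IsIntervenedSolution {D : ℕ}
    (sat : Fin D → (ℝ → ℝ) → (Fin D → ℝ → ℝ) → Prop)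
    (S : Set (Fin D)) (ζ : Fin D → ℝ → ℝ) (X : Fin D → ℝ → ℝ) : Prop :=
  (∀ i ∈ S, X i = ζ i) ∧ ∀ i ∉ S, sat i (X i) X

/-- `η` is an admitted solution of the intervened system to which every solution converges
asymptotically. -/
def IsAsymptoticSolution {D : ℕ}
    (sat : Fin D → (ℝ → ℝ) → (Fin D → ℝ → ℝ) → Prop)
    (Dyn : Fin D → Set (ℝ → ℝ))
    (S : Set (Fin D)) (ζ : Fin D → ℝ → ℝ) (η : Fin D → ℝ → ℝ) : Prop :=
  (∀ i, η i ∈ Dyn i) ∧ IsIntervenedSolution sat S ζ η ∧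
    ∀ X, IsIntervenedSolution sat S ζ X →
      ∀ i, Tendsto (fun t => X i t - η i t) atTop (nhds 0)

/-- The system intervened with `(S, ζ)` is dynamically stable with reference to `Dyn`. -/
def DynamicallyStable {D : ℕ}
    (sat : Fin D → (ℝ → ℝ) → (Fin D → ℝ → ℝ) → Prop)
    (Dyn : Fin D → Set (ℝ → ℝ))
    (S : Set (Fin D)) (ζ : Fin D → ℝ → ℝ) : Prop :=
  ∃! η, IsAsymptoticSolution sat Dyn S ζ η

/-- The pair (ODE system, Dyn) is structurally dynamically stable. -/
def StructurallyDynamicallyStable {D : ℕ}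
    (sat : Fin D → (ℝ → ℝ) → (Fin D → ℝ → ℝ) → Prop)
    (Dyn : Fin D → Set (ℝ → ℝ)) : Prop :=
  ∀ (i : Fin D) (ζ : Fin D → ℝ → ℝ), (∀ j, j ≠ i → ζ j ∈ Dyn j) →
    DynamicallyStable sat Dyn ({i}ᶜ) ζ

/-- Theorem 1: the structural equations are well-defined, depending only on the parents. -/
theorem structural_equations_well_defined {D : ℕ}
    (pa : Fin D → Set (Fin D))
    (sat : Fin D → (ℝ → ℝ) → (Fin D → ℝ → ℝ) → Prop)
    (Dyn : Fin D → Set (ℝ → ℝ))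
    (hloc : LocalToParents pa sat)
    (hsds : StructurallyDynamicallyStable sat Dyn)
    (i : Fin D) (ζ ζ' : Fin D → ℝ → ℝ)
    (hζ : ∀ j, j ≠ i → ζ j ∈ Dyn j)
    (hζ' : ∀ j, j ≠ i → ζ' j ∈ Dyn j)
    (hpa : ∀ j ∈ pa i, ζ j = ζ' j)
    (η η' : Fin D → ℝ → ℝ)
    (hη : IsAsymptoticSolution sat Dyn ({i}ᶜ) ζ η)
    (hη' : IsAsymptoticSolution sat Dyn ({i}ᶜ) ζ' η') :
    η i = η' i ∧ η i ∈ Dyn i := by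
  refine ⟨?_, hη.1 i⟩
  obtain ⟨hηDyn, ⟨hηfix, hηsat⟩, hηconv⟩ := hη
  obtain ⟨hη'Dyn, ⟨hη'fix, hη'sat⟩, hη'conv⟩ := hη'
  -- μ := η with its i-th component replaced by η' i
  set μ : Fin D → ℝ → ℝ := Function.update η i (η' i) with hμdef
  have hμi : μ i = η' i := Function.update_self i (η' i) η
  have hμj : ∀ j, j ≠ i → μ j = η j := fun j hj => Function.update_of_ne hj _ _
  -- μ is an asymptotic solution for (ζ, {i}ᶜ)
  have hμ : IsAsymptoticSolution sat Dyn ({i}ᶜ) ζ μ := by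
    refine ⟨?_, ⟨?_, ?_⟩, ?_⟩
    · intro j
      by_cases hj : j = i
      · subst hj; rw [hμi]; exact hη'Dyn j
      · rw [hμj j hj]; exact hηDyn j
    · intro j hj
      have hj' : j ≠ i := hj
      rw [hμj j hj']
      exact hηfix j hj
    · intro j hj
      have hj' : j = i := by simpa using hj
      subst hj'
      rw [hμi]
      have hsat' : sat j (η' j) η' := hη'sat j (by simp)
      refine (hloc j (η' j) μ η' ?_).mpr hsat'
      intro l hl
      by_cases hlj : l = j
      · subst hlj; exact hμi
      · calc μ l = η l := hμj l hlj
          _ = ζ l := hηfix l hlj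
          _ = ζ' l := hpa l hl
          _ = η' l := (hη'fix l hlj).symm
    · intro X hX j
      by_cases hj : j = i
      · subst hj
        rw [hμi]
        -- Y : replace components ≠ i of X by ζ'
        set Y : Fin D → ℝ → ℝ := fun k => if k = j then X j else ζ' k with hYdef
        have hYj : Y j = X j := by simp [hYdef]
        have hYsol : IsIntervenedSolution sat ({j}ᶜ) ζ' Y := by
          refine ⟨fun k hk => ?_, fun k hk => ?_⟩
          · have hk' : k ≠ j := hk
            simp [hYdef, hk']
          · have hk' : k = j := by simpa using hk
            subst hk'
            rw [hYj]
            have hsatX : sat k (X k) X := hX.2 k (by simp)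
            refine (hloc k (X k) X Y ?_).mp hsatX
            intro l hl
            by_cases hlk : l = k
            · subst hlk; simp [hYdef]
            · have h1 : X l = ζ l := hX.1 l hlk
              have h2 : Y l = ζ' l := by simp [hYdef, hlk]
              rw [h1, h2, hpa l hl]
        have := hη'conv Y hYsol j
        rw [hYj] at this
        exact this
      · rw [hμj j hj]
        exact hηconv X hX j
  obtain ⟨e, he, huniq⟩ := hsds i ζ hζ
  have h1 : μ = e := huniq μ hμ
  have h2 : (⟨hηDyn, ⟨hηfix, hηsat⟩, hηconv⟩ : IsAsymptoticSolution sat Dyn ({i}ᶜ) ζ η) = _ := rfl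
  have h3 : η = e := huniq η ⟨hηDyn, ⟨hηfix, hηsat⟩, hηconv⟩
  have : μ = η := h1.trans h3.symm
  have := congrFun this i
  rw [hμi] at this
  exact this.symm
end

section
/- Suppose the pair (ODE system, Dyn) is structurally dynamically stable and let F be a derived family of structural equations. Let S : Set (Fin D) and ζ : Fin D → ℝ → ℝ with ζ i ∈ Dyn i for all i ∈ S. Then for every η : Fin D → ℝ → ℝ with η i ∈ Dyn i for all i, η is a solution of the derived DSCM intervened with (S, ζ) if and only if η is a solution of the ODE system intervened with (S, ζ). -/
open Filter

/-- `F` is a derived family of structural equations for the ODE system `(pa, sat)`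
with reference to `Dyn`: each `F i` depends only on the parent components, and for every
admitted intervention on all variables but `i`, the unique asymptotic solution `η` of the
intervened system satisfies `η i = F i ζ`. -/
def DerivedFamily {D : ℕ} (pa : Fin D → Set (Fin D))
    (sat : Fin D → (ℝ → ℝ) → (Fin D → ℝ → ℝ) → Prop)
    (Dyn : Fin D → Set (ℝ → ℝ))
    (F : (i : Fin D) → (Fin D → ℝ → ℝ) → (ℝ → ℝ)) : Prop :=
  (∀ (i : Fin D) (ζ ζ' : Fin D → ℝ → ℝ), (∀ j ∈ pa i, ζ j = ζ' j) → F i ζ = F i ζ') ∧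
  ∀ (i : Fin D) (ζ : Fin D → ℝ → ℝ), (∀ j, j ≠ i → ζ j ∈ Dyn j) →
    ∀ η, IsAsymptoticSolution sat Dyn ({i}ᶜ) ζ η → η i = F i ζ

/-- `η` is a solution of the derived DSCM (with structural equations `F`)
intervened with `(S, ζ)`. -/
def IsDSCMSolution {D : ℕ}
    (F : (i : Fin D) → (Fin D → ℝ → ℝ) → (ℝ → ℝ))
    (S : Set (Fin D)) (ζ : Fin D → ℝ → ℝ) (η : Fin D → ℝ → ℝ) : Prop :=
  (∀ i ∈ S, η i = ζ i) ∧ ∀ i ∉ S, η i = F i η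

/-- Theorem 2 (solutions of a DSCM, first part): for admitted trajectories, solutions of the
derived DSCM intervened with `(S, ζ)` are exactly the admitted solutions of the ODE system
intervened with `(S, ζ)`. -/
theorem dscm_solution_iff_ode_solution {D : ℕ}
    (pa : Fin D → Set (Fin D))
    (sat : Fin D → (ℝ → ℝ) → (Fin D → ℝ → ℝ) → Prop)
    (Dyn : Fin D → Set (ℝ → ℝ))
    (hloc : LocalToParents pa sat)
    (hsds : StructurallyDynamicallyStable sat Dyn)
    (F : (i : Fin D) → (Fin D → ℝ → ℝ) → (ℝ → ℝ))
    (hF : DerivedFamily pa sat Dyn F)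
    (S : Set (Fin D)) (ζ : Fin D → ℝ → ℝ)
    (hζ : ∀ i ∈ S, ζ i ∈ Dyn i)
    (η : Fin D → ℝ → ℝ) (hη : ∀ i, η i ∈ Dyn i) :
    IsDSCMSolution F S ζ η ↔ IsIntervenedSolution sat S ζ η := by
  constructor
  · rintro ⟨h1, h2⟩
    refine ⟨h1, fun i hi => ?_⟩
    obtain ⟨η₀, hη₀, -⟩ := hsds i η (fun j _ => hη j)
    have hFi : η₀ i = F i η := hF.2 i η (fun j _ => hη j) η₀ hη₀
    have heq : η₀ = η := by
      funext j
      by_cases hj : j = i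
      · subst hj; rw [hFi]; exact (h2 j hi).symm
      · exact hη₀.2.1.1 j hj
    have := hη₀.2.1.2 i (by simp)
    rwa [heq] at this
  · rintro ⟨h1, h2⟩
    refine ⟨h1, fun i hi => ?_⟩
    obtain ⟨η₀, hη₀, -⟩ := hsds i η (fun j _ => hη j)
    have hηsol : IsIntervenedSolution sat ({i}ᶜ) η η := by
      refine ⟨fun j _ => rfl, fun j hj => ?_⟩
      have hji : j = i := by simpa using hj
      subst hji; exact h2 j hi
    have hasym : IsAsymptoticSolution sat Dyn ({i}ᶜ) η η := by
      refine ⟨hη, hηsol, fun X hX k => ?_⟩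
      by_cases hk : k = i
      · subst hk
        have h1t := hη₀.2.2 X hX k
        have h2t := hη₀.2.2 η hηsol k
        have h3t := h1t.sub h2t
        simp only [sub_sub_sub_cancel_right, sub_zero] at h3t
        exact h3t
      · have hXk : X k = η k := hX.1 k hk
        simp [hXk]
    exact hF.2 i η (fun j _ => hη j) η hasym
end

section
/- Suppose the pair (ODE system, Dyn) is structurally dynamically stable and let F be a derived family of structural equations. Let S : Set (Fin D) and ζ : Fin D → ℝ → ℝ with ζ i ∈ Dyn i for all i ∈ S. If the ODE system intervened with (S, ζ) is dynamically stable with reference to Dyn, with unique asymptotic solution η, then η is the unique solution of the derived DSCM intervened with (S, ζ): η solves the intervened DSCM, and any η' with η' i ∈ Dyn i for all i that solves the intervened DSCM equals η. -/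
open Filter

/-- Theorem 2 (solutions of a DSCM, second part): if the intervened ODE system is dynamically
stable with unique asymptotic solution `η`, then `η` is the unique solution of the derived DSCM
intervened with `(S, ζ)`. -/
theorem asymptotic_solution_is_unique_dscm_solution {D : ℕ}
    (pa : Fin D → Set (Fin D))
    (sat : Fin D → (ℝ → ℝ) → (Fin D → ℝ → ℝ) → Prop)
    (Dyn : Fin D → Set (ℝ → ℝ))
    (hloc : LocalToParents pa sat)
    (hsds : StructurallyDynamicallyStable sat Dyn)
    (F : (i : Fin D) → (Fin D → ℝ → ℝ) → (ℝ → ℝ))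
    (hF : DerivedFamily pa sat Dyn F)
    (S : Set (Fin D)) (ζ : Fin D → ℝ → ℝ)
    (hζ : ∀ i ∈ S, ζ i ∈ Dyn i)
    (hstable : DynamicallyStable sat Dyn S ζ)
    (η : Fin D → ℝ → ℝ)
    (hη : IsAsymptoticSolution sat Dyn S ζ η) :
    IsDSCMSolution F S ζ η ∧
      ∀ η' : Fin D → ℝ → ℝ, (∀ i, η' i ∈ Dyn i) → IsDSCMSolution F S ζ η' → η' = η := by
  obtain ⟨hηDyn, hηsol, hηasym⟩ := hη
  have key : ∀ i ∉ S, IsAsymptoticSolution sat Dyn ({i}ᶜ) η η := by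
    intro i hiS
    have hηisol : IsIntervenedSolution sat ({i}ᶜ) η η := by
      refine ⟨fun j _ => rfl, fun j hj => ?_⟩
      simp only [Set.mem_compl_iff, Set.mem_singleton_iff, not_not] at hj
      subst hj
      exact hηsol.2 j hiS
    obtain ⟨ηt, hηt, _⟩ := hsds i η (fun j _ => hηDyn j)
    refine ⟨hηDyn, hηisol, fun X hX j => ?_⟩
    by_cases hji : j = i
    · subst hji
      have h1 := hηt.2.2 X hX j
      have h2 := hηt.2.2 η hηisol j
      simpa using h1.sub h2
    · have hXj : X j = η j := hX.1 j (by simpa using hji)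
      simp [hXj]
  refine ⟨⟨fun i hi => hηsol.1 i hi, fun i hi => ?_⟩, ?_⟩
  · exact hF.2 i η (fun j _ => hηDyn j) η (key i hi)
  · rintro η' hη'Dyn ⟨h1', h2'⟩
    have hsol' : IsIntervenedSolution sat S ζ η' := by
      refine ⟨h1', fun i hi => ?_⟩
      obtain ⟨ηt, hηt, _⟩ := hsds i η' (fun j _ => hη'Dyn j)
      have hti : ηt i = F i η' := hF.2 i η' (fun j _ => hη'Dyn j) ηt hηt
      have heq : ηt = η' := by
        funext j
        by_cases hji : j = i
        · subst hji; rw [hti, ← h2' j hi]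
        · exact hηt.2.1.1 j (by simpa using hji)
      have hsat := hηt.2.1.2 i (by simp)
      rwa [heq] at hsat
    have hasym' : IsAsymptoticSolution sat Dyn S ζ η' := by
      refine ⟨hη'Dyn, hsol', fun X hX i => ?_⟩
      have h1 := hηasym X hX i
      have h2 := hηasym η' hsol' i
      simpa using h1.sub h2
    obtain ⟨η₀, _, huniq⟩ := hstable
    rw [huniq η' hasym', huniq η ⟨hηDyn, hηsol, hηasym⟩]
end

section
/- Suppose the pair (ODE system D, Dyn) is structurally dynamically stable, and fix S : Set (Fin D) and ζ with ζ i ∈ Dyn i for all i ∈ S. Let D' denote the intervened ODE system whose parent map is pa' i = ∅ for i ∈ S and pa' i = pa i otherwise, and whose predicates are sat' i x X := (x = ζ i) for i ∈ S and sat' i = sat i for i ∉ S. Then: (a) the pair (D', Dyn) is structurally dynamically stable; (b) for any derived family F of structural equations for D and any derived family F' of structural equations for D', and for every η with η i ∈ Dyn i for all i, η is a solution of the (non-intervened) derived DSCM of D' if and only if η is a solution of the derived DSCM of D intervened with (S, ζ); that is, deriving the DSCM from the intervened ODE gives the same model as intervening in the derived DSCM. -/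
open Filter

/-- Theorem 3: intervening in the ODE and then deriving the DSCM gives the same model as
deriving the DSCM and then intervening in it.  Here `(pa', sat')` is the ODE system obtained
from `(pa, sat)` by the intervention `(S, ζ)`: for `i ∈ S` the parents become empty and the
`i`-th equation becomes `x = ζ i`; for `i ∉ S` nothing changes.
Part (a): the intervened pair is again structurally dynamically stable.
Part (b): for admitted trajectories, solutions of the (non-intervened) DSCM derived from the
intervened ODE coincide with solutions of the DSCM derived from the original ODE intervened
with `(S, ζ)`. -/
theorem intervention_commutes_with_dscm_derivation {D : ℕ}
    (pa : Fin D → Set (Fin D))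
    (sat : Fin D → (ℝ → ℝ) → (Fin D → ℝ → ℝ) → Prop)
    (Dyn : Fin D → Set (ℝ → ℝ))
    (hloc : LocalToParents pa sat)
    (hsds : StructurallyDynamicallyStable sat Dyn)
    (S : Set (Fin D)) (ζ : Fin D → ℝ → ℝ)
    (hζ : ∀ i ∈ S, ζ i ∈ Dyn i)
    (pa' : Fin D → Set (Fin D))
    (sat' : Fin D → (ℝ → ℝ) → (Fin D → ℝ → ℝ) → Prop)
    (hpa'S : ∀ i ∈ S, pa' i = ∅)
    (hpa'c : ∀ i ∉ S, pa' i = pa i)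
    (hsat'S : ∀ i ∈ S, ∀ (x : ℝ → ℝ) (X : Fin D → ℝ → ℝ), sat' i x X ↔ x = ζ i)
    (hsat'c : ∀ i ∉ S, sat' i = sat i) :
    StructurallyDynamicallyStable sat' Dyn ∧
      ∀ (F F' : (i : Fin D) → (Fin D → ℝ → ℝ) → (ℝ → ℝ)),
        DerivedFamily pa sat Dyn F → DerivedFamily pa' sat' Dyn F' →
        ∀ η : Fin D → ℝ → ℝ, (∀ i, η i ∈ Dyn i) →
          ((∀ i, η i = F' i η) ↔ IsDSCMSolution F S ζ η) := by
  classical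
  -- For i ∉ S the intervened solutions of sat' and sat coincide
  have hequiv : ∀ i ∉ S, ∀ (ζ'' : Fin D → ℝ → ℝ) (X : Fin D → ℝ → ℝ),
      IsIntervenedSolution sat' ({i}ᶜ) ζ'' X ↔ IsIntervenedSolution sat ({i}ᶜ) ζ'' X := by
    intro i hi ζ'' X
    constructor
    · rintro ⟨h1, h2⟩
      refine ⟨h1, fun j hj => ?_⟩
      have hji : j = i := by simpa using hj
      subst hji
      have := h2 j hj
      rwa [hsat'c j hi] at this
    · rintro ⟨h1, h2⟩
      refine ⟨h1, fun j hj => ?_⟩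
      have hji : j = i := by simpa using hj
      subst hji
      rw [hsat'c j hi]
      exact h2 j hj
  have hasymp : ∀ i ∉ S, ∀ (ζ'' : Fin D → ℝ → ℝ) (X : Fin D → ℝ → ℝ),
      IsAsymptoticSolution sat' Dyn ({i}ᶜ) ζ'' X ↔
        IsAsymptoticSolution sat Dyn ({i}ᶜ) ζ'' X := by
    intro i hi ζ'' X
    constructor
    · rintro ⟨hd, hs, hc⟩
      exact ⟨hd, (hequiv i hi ζ'' X).mp hs,
        fun Y hY => hc Y ((hequiv i hi ζ'' Y).mpr hY)⟩
    · rintro ⟨hd, hs, hc⟩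
      exact ⟨hd, (hequiv i hi ζ'' X).mpr hs,
        fun Y hY => hc Y ((hequiv i hi ζ'' Y).mp hY)⟩
  -- For i ∈ S, solutions of the intervened sat' system are fully determined
  have hSsol : ∀ i ∈ S, ∀ (ζ'' : Fin D → ℝ → ℝ) (X : Fin D → ℝ → ℝ),
      IsIntervenedSolution sat' ({i}ᶜ) ζ'' X →
        X = fun j => if j = i then ζ i else ζ'' j := by
    intro i hi ζ'' X ⟨h1, h2⟩
    funext j
    by_cases hji : j = i
    · subst hji
      have := h2 j (by simp)
      rw [hsat'S j hi] at this
      simp [this]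
    · have := h1 j (by simpa using hji)
      simp [hji, this]
  have hSasym : ∀ i ∈ S, ∀ (ζ'' : Fin D → ℝ → ℝ), (∀ j, j ≠ i → ζ'' j ∈ Dyn j) →
      IsAsymptoticSolution sat' Dyn ({i}ᶜ) ζ''
        (fun j => if j = i then ζ i else ζ'' j) := by
    intro i hi ζ'' hζ''
    refine ⟨?_, ⟨?_, ?_⟩, ?_⟩
    · intro j
      by_cases hji : j = i
      · subst hji; simp [hζ j hi]
      · simp [hji, hζ'' j hji]
    · intro j hj
      have hji : j ≠ i := by simpa using hj
      simp [hji]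
    · intro j hj
      have hji : j = i := by simpa using hj
      subst hji
      rw [hsat'S j hi]
      simp
    · intro X hX j
      have hXe := hSsol i hi ζ'' X hX
      have : (fun t => X j t - (fun j => if j = i then ζ i else ζ'' j) j t)
          = fun _ => (0 : ℝ) := by
        funext t; rw [hXe]; ring
      rw [this]
      exact tendsto_const_nhds
  constructor
  · -- Part (a)
    intro i ζ'' hζ''
    by_cases hi : i ∈ S
    · refine ⟨fun j => if j = i then ζ i else ζ'' j, hSasym i hi ζ'' hζ'', ?_⟩
      intro Y hY
      exact hSsol i hi ζ'' Y hY.2.1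
    · obtain ⟨η₀, h₀, huniq⟩ := hsds i ζ'' hζ''
      exact ⟨η₀, (hasymp i hi ζ'' η₀).mpr h₀,
        fun Y hY => huniq Y ((hasymp i hi ζ'' Y).mp hY)⟩
  · -- Part (b)
    intro F F' hF hF' η hη
    have key : ∀ i, F' i η = if i ∈ S then ζ i else F i η := by
      intro i
      by_cases hi : i ∈ S
      · have hasy := hSasym i hi η (fun j _ => hη j)
        have := hF'.2 i η (fun j _ => hη j) _ hasy
        simp at this
        simp [hi, ← this]
      · obtain ⟨η₀, h₀, _⟩ := hsds i η (fun j _ => hη j)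
        have h1 : η₀ i = F i η := hF.2 i η (fun j _ => hη j) η₀ h₀
        have h2 : η₀ i = F' i η :=
          hF'.2 i η (fun j _ => hη j) η₀ ((hasymp i hi η η₀).mpr h₀)
        simp [hi, ← h1, ← h2]
    constructor
    · intro h
      refine ⟨fun i hi => ?_, fun i hi => ?_⟩
      · rw [h i, key i, if_pos hi]
      · rw [h i, key i, if_neg hi]
    · rintro ⟨h1, h2⟩ i
      by_cases hi : i ∈ S
      · rw [key i, if_pos hi]; exact h1 i hi
      · rw [key i, if_neg hi]; exact h2 i hi
end

section
/- Suppose the pair (ODE system D, Dyn) is structurally dynamically stable; fix S : Set (Fin D) and ζ with ζ i ∈ Dyn i for all i ∈ S, and let D' be the ODE system obtained from D by the intervention (S, ζ) (parent map pa' i = ∅ and predicate sat' i x X := (x = ζ i) for i ∈ S; unchanged otherwise). Fix also T : Set (Fin D) with T ⊆ Sᶜ and ζ' with ζ' i ∈ Dyn i for all i ∈ T. Let F be a derived family of structural equations for D and F' a derived family for D'. Then for every η with η i ∈ Dyn i for all i: η is a solution of the derived DSCM of D' intervened with (T, ζ') if and only if η is a solution of the derived DSCM of D intervened with (S ∪ T,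 ζ''), where ζ'' i = ζ i for i ∈ S and ζ'' i = ζ' i for i ∈ T. -/
open Filter

/-- Corollary 1: intervening with `(T, ζ')` in the DSCM derived from the ODE already intervened
with `(S, ζ)` gives the same model as intervening with `(S ∪ T, ζ'')` in the DSCM derived from
the original ODE, where `ζ''` agrees with `ζ` on `S` and with `ζ'` on `T`. -/
theorem double_intervention_commutes {D : ℕ}
    (pa : Fin D → Set (Fin D))
    (sat : Fin D → (ℝ → ℝ) → (Fin D → ℝ → ℝ) → Prop)
    (Dyn : Fin D → Set (ℝ → ℝ))
    (hloc : LocalToParents pa sat)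
    (hsds : StructurallyDynamicallyStable sat Dyn)
    (S : Set (Fin D)) (ζ : Fin D → ℝ → ℝ)
    (hζ : ∀ i ∈ S, ζ i ∈ Dyn i)
    (pa' : Fin D → Set (Fin D))
    (sat' : Fin D → (ℝ → ℝ) → (Fin D → ℝ → ℝ) → Prop)
    (hpa'S : ∀ i ∈ S, pa' i = ∅)
    (hpa'c : ∀ i ∉ S, pa' i = pa i)
    (hsat'S : ∀ i ∈ S, ∀ (x : ℝ → ℝ) (X : Fin D → ℝ → ℝ), sat' i x X ↔ x = ζ i)
    (hsat'c : ∀ i ∉ S, sat' i = sat i)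
    (T : Set (Fin D)) (hT : T ⊆ Sᶜ)
    (ζ' : Fin D → ℝ → ℝ) (hζ' : ∀ i ∈ T, ζ' i ∈ Dyn i)
    (F F' : (i : Fin D) → (Fin D → ℝ → ℝ) → (ℝ → ℝ))
    (hF : DerivedFamily pa sat Dyn F)
    (hF' : DerivedFamily pa' sat' Dyn F')
    (ζ'' : Fin D → ℝ → ℝ)
    (hζ''S : ∀ i ∈ S, ζ'' i = ζ i)
    (hζ''T : ∀ i ∈ T, ζ'' i = ζ' i) :
    ∀ η : Fin D → ℝ → ℝ, (∀ i, η i ∈ Dyn i) →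
      (IsDSCMSolution F' T ζ' η ↔ IsDSCMSolution F (S ∪ T) ζ'' η) := by
  -- Key fact A: for i ∈ S, the derived structural equation F' i is constantly ζ i.
  have keyA : ∀ i ∈ S, ∀ ζt : Fin D → ℝ → ℝ, (∀ j, j ≠ i → ζt j ∈ Dyn j) →
      F' i ζt = ζ i := by
    intro i hi ζt hζt
    set η₀ : Fin D → ℝ → ℝ := fun j => if j = i then ζ i else ζt j with hη₀
    have hAs : IsAsymptoticSolution sat' Dyn ({i}ᶜ) ζt η₀ := by
      refine ⟨?_, ⟨?_, ?_⟩, ?_⟩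
      · intro j
        by_cases h : j = i
        · subst h; simpa [hη₀] using hζ j hi
        · simpa [hη₀, h] using hζt j h
      · intro j hj
        have h : j ≠ i := hj
        simp [hη₀, h]
      · intro j hj
        have hji : j = i := by simpa using hj
        subst hji
        rw [hsat'S j hi]
        simp [hη₀]
      · intro X hX j
        have hXj : X j = η₀ j := by
          by_cases h : j = i
          · subst h
            have h2 := hX.2 j (by simp)
            rw [hsat'S j hi] at h2
            simp [hη₀, h2]
          · have h1 := hX.1 j (by simpa using h)
            simp [hη₀, h, h1]
        rw [hXj]
        simpa using tendsto_const_nhds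
    have h1 := hF'.2 i ζt hζt η₀ hAs
    have h2 : η₀ i = ζ i := by simp [hη₀]
    rw [← h1, h2]
  -- Key fact B: for i ∉ S, F' i agrees with F i on admitted inputs.
  have keyB : ∀ i ∉ S, ∀ ζt : Fin D → ℝ → ℝ, (∀ j, j ≠ i → ζt j ∈ Dyn j) →
      F' i ζt = F i ζt := by
    intro i hi ζt hζt
    obtain ⟨η₀, hη₀, -⟩ := hsds i ζt hζt
    have hiff : ∀ X, IsIntervenedSolution sat' ({i}ᶜ) ζt X ↔
        IsIntervenedSolution sat ({i}ᶜ) ζt X := by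
      intro X
      constructor
      · rintro ⟨h1, h2⟩
        refine ⟨h1, ?_⟩
        intro j hj
        have hji : j = i := by simpa using hj
        subst hji
        rw [← hsat'c j hi]
        exact h2 j (by simp)
      · rintro ⟨h1, h2⟩
        refine ⟨h1, ?_⟩
        intro j hj
        have hji : j = i := by simpa using hj
        subst hji
        rw [hsat'c j hi]
        exact h2 j (by simp)
    have hAs' : IsAsymptoticSolution sat' Dyn ({i}ᶜ) ζt η₀ :=
      ⟨hη₀.1, (hiff η₀).2 hη₀.2.1, fun X hX => hη₀.2.2 X ((hiff X).1 hX)⟩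
    rw [← hF'.2 i ζt hζt η₀ hAs', hF.2 i ζt hζt η₀ hη₀]
  intro η hη
  constructor
  · rintro ⟨h1, h2⟩
    refine ⟨?_, ?_⟩
    · intro i hi
      rcases hi with hi | hi
      · have hiT : i ∉ T := fun h => (hT h) hi
        rw [h2 i hiT, keyA i hi η (fun j _ => hη j), hζ''S i hi]
      · rw [h1 i hi, hζ''T i hi]
    · intro i hi
      have hiS : i ∉ S := fun h => hi (Or.inl h)
      have hiT : i ∉ T := fun h => hi (Or.inr h)
      rw [h2 i hiT, keyB i hiS η (fun j _ => hη j)]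
  · rintro ⟨h1, h2⟩
    refine ⟨?_, ?_⟩
    · intro i hi
      rw [h1 i (Or.inr hi), hζ''T i hi]
    · intro i hi
      by_cases hiS : i ∈ S
      · rw [h1 i (Or.inl hiS), hζ''S i hiS, keyA i hiS η (fun j _ => hη j)]
      · rw [h2 i (fun h => h.elim hiS hi), keyB i hiS η (fun j _ => hη j)]
end

section
/- Let Traj be a collection of interventions, i.e., pairs (S, ζ) with S : Set (Fin D) and ζ i ∈ Dyn i for all i ∈ S, and suppose that for every (S, ζ) ∈ Traj the intervened system is dynamically stable with reference to Dyn. Let Dyn' : Fin D → Set (ℝ → ℝ) satisfy Dyn i ⊆ Dyn' i for all i, and suppose that no asymptotic trajectory is gained: whenever η satisfies η i ∈ Dyn i for all i, and η' satisfies η' i ∈ Dyn' i for all i but η' j ∉ Dyn j for some j, it is NOT the case that Filter.Tendsto (fun t => η' i t - η i t) Filter.atTop (nhds 0) for every i. Then for every (S, ζ) ∈ Traj the intervened system is also dynamically stable with reference to Dyn'. -/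
open Filter

/-- If `(𝒟, Traj)` is dynamically stable with reference to `Dyn`, and `Dyn'` is a larger
family of admitted trajectories that gains no asymptotic trajectories (no trajectory admitted by
`Dyn'` but not by `Dyn` is asymptotically equal to a trajectory admitted by `Dyn`), then
`(𝒟, Traj)` is also dynamically stable with reference to `Dyn'`. -/
theorem dynamically_stable_of_larger_dyn {D : ℕ}
    (pa : Fin D → Set (Fin D))
    (sat : Fin D → (ℝ → ℝ) → (Fin D → ℝ → ℝ) → Prop)
    (Dyn : Fin D → Set (ℝ → ℝ))
    (hloc : LocalToParents pa sat)
    (Traj : Set (Set (Fin D) × (Fin D → ℝ → ℝ)))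
    (hTrajAdm : ∀ p ∈ Traj, ∀ i ∈ p.1, p.2 i ∈ Dyn i)
    (hTrajStable : ∀ p ∈ Traj, DynamicallyStable sat Dyn p.1 p.2)
    (Dyn' : Fin D → Set (ℝ → ℝ))
    (hsub : ∀ i, Dyn i ⊆ Dyn' i)
    (hnogain : ∀ η η' : Fin D → ℝ → ℝ, (∀ i, η i ∈ Dyn i) → (∀ i, η' i ∈ Dyn' i) →
      (∃ j, η' j ∉ Dyn j) →
      ¬ (∀ i, Tendsto (fun t => η' i t - η i t) atTop (nhds 0))) :
    ∀ p ∈ Traj, DynamicallyStable sat Dyn' p.1 p.2 := by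
  intro p hp
  obtain ⟨η, ⟨hηDyn, hηsol, hηconv⟩, huniq⟩ := hTrajStable p hp
  refine ⟨η, ⟨fun i => hsub i (hηDyn i), hηsol, hηconv⟩, ?_⟩
  rintro η' ⟨hη'Dyn, hη'sol, hη'conv⟩
  have hconv : ∀ i, Tendsto (fun t => η' i t - η i t) atTop (nhds 0) :=
    hηconv η' hη'sol
  have hmem : ∀ i, η' i ∈ Dyn i := by
    by_contra h
    push_neg at h
    exact hnogain η η' hηDyn hη'Dyn h hconv
  exact huniq η' ⟨hmem, hη'sol, hη'conv⟩
end

section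
/- Let m, b, k : ℝ with 0 < m, 0 < b, 0 < k, and let X : ℝ → ℝ solve the damped oscillator equation with forcing 0, i.e., X is twice differentiable and m * deriv (deriv X) t + b * deriv X t + k * X t = 0 for all t : ℝ. Then Filter.Tendsto X Filter.atTop (nhds 0) and Filter.Tendsto (deriv X) Filter.atTop (nhds 0). -/
/-!
With `w = 2 m ẋ + b x`, the quadratic form `L = w² + (4 m k + b²) x²` satisfies
`L' = -4 b (m ẋ² + k x²)` along solutions (completing the square in `w` makes the cross terms
`x ẋ` cancel), and this is at most `-c L` for `c = b k / (b² + 2 m k)`. Hence `L` decays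
exponentially, and `L` dominates both `x²` and `w²`, so `x → 0` and `ẋ = (w - b x) / (2 m) → 0`.
-/

open Filter Real

/-- `X` solves the damped oscillator equation `m ẍ + b ẋ + k x = g` with forcing `g`:
`X` is twice differentiable and the equation holds at every time `t`. -/
def SolvesDampedOsc (m b k : ℝ) (g : ℝ → ℝ) (X : ℝ → ℝ) : Prop :=
  Differentiable ℝ X ∧ Differentiable ℝ (deriv X) ∧
    ∀ t : ℝ, m * deriv (deriv X) t + b * deriv X t + k * X t = g t

open Topology

lemma le_mul_exp_neg_of_hasDerivAt_le {f f' : ℝ → ℝ} {c : ℝ} (hf : ∀ t, HasDerivAt f (f' t) t)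
    (hle : ∀ t, f' t ≤ -c * f t) {t : ℝ} (ht : 0 ≤ t) : f t ≤ f 0 * exp (-(c * t)) := by
  have hg : ∀ s, HasDerivAt (fun s => f s * exp (c * s)) ((f' s + c * f s) * exp (c * s)) s := by
    intro s
    refine ((hf s).mul (((hasDerivAt_id' s).const_mul c).exp)).congr_deriv ?_
    ring
  have hanti : Antitone fun s => f s * exp (c * s) :=
    antitone_of_deriv_nonpos (fun s => (hg s).differentiableAt) fun s => by
      rw [(hg s).deriv]
      exact mul_nonpos_of_nonpos_of_nonneg (by linarith [hle s]) (exp_pos _).le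
  calc f t = f t * exp (c * t) * exp (-(c * t)) := by rw [mul_assoc, ← exp_add]; simp
    _ ≤ f 0 * exp (-(c * t)) := by
      gcongr
      simpa using hanti ht

lemma tendsto_zero_of_hasDerivAt_le_neg_mul {f f' : ℝ → ℝ} {c : ℝ} (hc : 0 < c)
    (hf : ∀ t, HasDerivAt f (f' t) t) (hle : ∀ t, f' t ≤ -c * f t) (hf₀ : ∀ t, 0 ≤ f t) :
    Tendsto f atTop (𝓝 0) := by
  have hexp : Tendsto (fun t => f 0 * exp (-(c * t))) atTop (𝓝 0) := by
    simpa using (tendsto_exp_neg_atTop_nhds_zero.comp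
      (tendsto_id.const_mul_atTop hc)).const_mul (f 0)
  refine tendsto_of_tendsto_of_tendsto_of_le_of_le' tendsto_const_nhds hexp
    (Eventually.of_forall hf₀) ?_
  filter_upwards [eventually_ge_atTop 0] with t ht
  exact le_mul_exp_neg_of_hasDerivAt_le hf hle ht

lemma tendsto_zero_of_mul_sq_le {α : Type*} {l : Filter α} {f Y : α → ℝ} {a : ℝ} (ha : 0 < a)
    (hY : ∀ t, a * Y t ^ 2 ≤ f t) (hf : Tendsto f l (𝓝 0)) : Tendsto Y l (𝓝 0) := by
  have hsq : Tendsto (fun t => Y t ^ 2) l (𝓝 0) := by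
    refine squeeze_zero (fun t => sq_nonneg _) (fun t => ?_) (by simpa using hf.div_const a)
    rw [le_div_iff₀ ha]; linarith [hY t]
  rw [tendsto_zero_iff_abs_tendsto_zero]
  simpa only [sqrt_sq_eq_abs, sqrt_zero, Function.comp_def] using hsq.sqrt

noncomputable def dampedOscLyapunov (m b k : ℝ) (X : ℝ → ℝ) (t : ℝ) : ℝ :=
  (2 * m * deriv X t + b * X t) ^ 2 + (4 * m * k + b ^ 2) * X t ^ 2

lemma hasDerivAt_dampedOscLyapunov {m b k : ℝ} {X : ℝ → ℝ}
    (hX : SolvesDampedOsc m b k (fun _ => 0) X) (t : ℝ) :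
    HasDerivAt (dampedOscLyapunov m b k X) (-4 * b * (m * deriv X t ^ 2 + k * X t ^ 2)) t := by
  obtain ⟨hX₁, hX₂, hode⟩ := hX
  have hx := (hX₁ t).hasDerivAt
  have hv := (hX₂ t).hasDerivAt
  refine ((((hv.const_mul (2 * m)).add (hx.const_mul b)).pow 2).add
    ((hx.pow 2).const_mul (4 * m * k + b ^ 2))).congr_deriv ?_
  simp only [Pi.add_apply]
  linear_combination (4 * (2 * m * deriv X t + b * X t)) * hode t

lemma mul_dampedOscLyapunov_le {m b k : ℝ} (hm : 0 < m) (hb : 0 < b) (hk : 0 < k)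
    (X : ℝ → ℝ) (t : ℝ) :
    b * k / (b ^ 2 + 2 * m * k) * dampedOscLyapunov m b k X t ≤
      4 * b * (m * deriv X t ^ 2 + k * X t ^ 2) := by
  set v := deriv X t
  set x := X t
  have hL :
      dampedOscLyapunov m b k X t ≤ 8 * m ^ 2 * v ^ 2 + (3 * b ^ 2 + 4 * m * k) * x ^ 2 := by
    unfold dampedOscLyapunov
    nlinarith [sq_nonneg (2 * m * v - b * x)]
  rw [div_mul_eq_mul_div, div_le_iff₀ (by positivity)]
  calc b * k * dampedOscLyapunov m b k X t
      ≤ b * k * (8 * m ^ 2 * v ^ 2 + (3 * b ^ 2 + 4 * m * k) * x ^ 2) := by gcongr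
    _ ≤ 4 * b * (m * v ^ 2 + k * x ^ 2) * (b ^ 2 + 2 * m * k) := by
      have : 0 ≤ 4 * b ^ 3 * m * v ^ 2 + b ^ 3 * k * x ^ 2 + 4 * b * m * k ^ 2 * x ^ 2 := by
        positivity
      linear_combination this

/-- The homogeneous (transient) solution of the damped oscillator decays to zero,
together with its derivative. -/
theorem damped_osc_homogeneous_decay (m b k : ℝ) (hm : 0 < m) (hb : 0 < b) (hk : 0 < k)
    (X : ℝ → ℝ) (hX : SolvesDampedOsc m b k (fun _ => 0) X) :
    Tendsto X atTop (nhds 0) ∧ Tendsto (deriv X) atTop (nhds 0) := by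
  have hL : Tendsto (dampedOscLyapunov m b k X) atTop (𝓝 0) :=
    tendsto_zero_of_hasDerivAt_le_neg_mul (c := b * k / (b ^ 2 + 2 * m * k)) (by positivity)
      (hasDerivAt_dampedOscLyapunov hX)
      (fun t => by linarith [mul_dampedOscLyapunov_le hm hb hk X t])
      (fun t => by unfold dampedOscLyapunov; positivity)
  have hX₀ : Tendsto X atTop (𝓝 0) :=
    tendsto_zero_of_mul_sq_le (by positivity) (fun t => le_add_of_nonneg_left (sq_nonneg _)) hL
  have hW : Tendsto (fun t => 2 * m * deriv X t + b * X t) atTop (𝓝 0) :=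
    tendsto_zero_of_mul_sq_le one_pos
      (fun t => by rw [one_mul]; exact le_add_of_nonneg_right (by positivity)) hL
  refine ⟨hX₀, ?_⟩
  have hv := (hW.sub (hX₀.const_mul b)).div_const (2 * m)
  simp only [mul_zero, sub_zero, zero_div, add_sub_cancel_right] at hv
  exact hv.congr fun t => by field_simp
end

section
/- Let m, b, k : ℝ with 0 < m, 0 < b, 0 < k, and let A, ω, φ : ℕ → ℝ with Summable (fun j => |A j|). Define g : ℝ → ℝ by g t = ∑' j, A j * Real.cos (ω j * t + φ j), and define P : ℝ → ℝ by P t = ∑' j, (A j / ((k - m * (ω j)^2)^2 + b^2 * (ω j)^2)) * ((k - m * (ω j)^2) * Real.cos (ω j * t + φ j) + b * (ω j) * Real.sin (ω j * t + φ j)). Then P solves the damped oscillator equation with forcing g: P is twice differentiable and m * deriv (deriv P) t + b * deriv P t + k * P t = g t for all t : ℝ. -/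
/-!
The sinusoid `A cos (ω t + φ)` has the particular solution
`Re (A e^{i(ω t + φ)} / (k - m ω² + i b ω))`. Since `|k - m ω² + i b ω|²` is bounded below and
grows like `m² ω⁴`, this solution and its first two derivatives are bounded by `C |A|` with `C`
independent of `ω`. Hence the three series for `P`, `P'`, `P''` are dominated by `C ∑ |A j|`, so
`P` can be differentiated termwise twice and the equation holds term by term.
-/

open Filter Real

theorem solvesDampedOsc_tsum {ι : Type*} {m b k : ℝ} {f f' f'' g : ι → ℝ → ℝ} {u : ι → ℝ}
    (hu : Summable u) (hf : ∀ i t, HasDerivAt (f i) (f' i t) t)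
    (hf' : ∀ i t, HasDerivAt (f' i) (f'' i t) t) (hf_le : ∀ i t, |f i t| ≤ u i)
    (hf'_le : ∀ i t, |f' i t| ≤ u i) (hf''_le : ∀ i t, |f'' i t| ≤ u i)
    (hsol : ∀ i t, m * f'' i t + b * f' i t + k * f i t = g i t) :
    SolvesDampedOsc m b k (fun t => ∑' i, g i t) (fun t => ∑' i, f i t) := by
  have summable {F : ι → ℝ → ℝ} (hF : ∀ i t, |F i t| ≤ u i) (t : ℝ) :
      Summable fun i => F i t :=
    .of_norm_bounded hu fun i => hF i t
  have hderiv (t : ℝ) : HasDerivAt (fun t => ∑' i, f i t) (∑' i, f' i t) t :=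
    hasDerivAt_tsum hu hf hf'_le (summable hf_le 0) t
  have hderiv' (t : ℝ) : HasDerivAt (fun t => ∑' i, f' i t) (∑' i, f'' i t) t :=
    hasDerivAt_tsum hu hf' hf''_le (summable hf'_le 0) t
  have hP' : deriv (fun t => ∑' i, f i t) = fun t => ∑' i, f' i t :=
    funext fun t => (hderiv t).deriv
  refine ⟨fun t => (hderiv t).differentiableAt, ?_, fun t => ?_⟩
  · rw [hP']
    exact fun t => (hderiv' t).differentiableAt
  · have h2 := (summable hf''_le t).mul_left m
    have h1 := (summable hf'_le t).mul_left b
    have h0 := (summable hf_le t).mul_left k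
    rw [hP', (hderiv' t).deriv, ← tsum_mul_left, ← tsum_mul_left, ← tsum_mul_left,
      ← h2.tsum_add h1, ← (h2.add h1).tsum_add h0]
    exact tsum_congr (hsol · t)

theorem sq_mul_cos_add_mul_sin_le (a c θ : ℝ) : (a * cos θ + c * sin θ) ^ 2 ≤ a ^ 2 + c ^ 2 := by
  nlinarith [sin_sq_add_cos_sq θ, sq_nonneg (a * sin θ - c * cos θ)]

theorem abs_div_mul_mul_le {A D p S C : ℝ} (hD : 0 < D) (hC : 0 ≤ C) (hS : S ^ 2 ≤ D)
    (hp : p ^ 2 ≤ C ^ 2 * D) : |A / D * (p * S)| ≤ C * |A| := by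
  have hpS : |p * S| ≤ C * D := by
    refine abs_le_of_sq_le_sq ?_ (by positivity)
    calc (p * S) ^ 2 = p ^ 2 * S ^ 2 := by ring
      _ ≤ C ^ 2 * D * D := mul_le_mul hp hS (sq_nonneg S) (by positivity)
      _ = (C * D) ^ 2 := by ring
  calc |A / D * (p * S)| = |A| / D * |p * S| := by rw [abs_mul, abs_div, abs_of_pos hD]
    _ ≤ |A| / D * (C * D) := by gcongr
    _ = C * |A| := by field_simp

section DampedOsc

variable {m b k : ℝ}

/-- `|k - m ω² + i b ω|²`, the squared modulus of the inverse transfer function at frequency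
`ω`. -/
def dampedOscDenom (m b k ω : ℝ) : ℝ := (k - m * ω ^ 2) ^ 2 + b ^ 2 * ω ^ 2

theorem min_le_dampedOscDenom (hm : 0 < m) (hk : 0 < k) (ω : ℝ) :
    min (k ^ 2 / 4) (b ^ 2 * k / (2 * m)) ≤ dampedOscDenom m b k ω := by
  unfold dampedOscDenom
  rcases le_or_gt (2 * m * ω ^ 2) k with hω | hω
  · have : k / 2 ≤ k - m * ω ^ 2 := by linarith
    exact (min_le_left _ _).trans (by nlinarith [sq_nonneg (b * ω)])
  · refine (min_le_right _ _).trans ?_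
    rw [div_le_iff₀ (by positivity)]
    nlinarith [mul_le_mul_of_nonneg_left hω.le (sq_nonneg b), sq_nonneg (k - m * ω ^ 2)]

theorem dampedOscDenom_pos (hm : 0 < m) (hb : 0 < b) (hk : 0 < k) (ω : ℝ) :
    0 < dampedOscDenom m b k ω :=
  (lt_min (by positivity) (by positivity)).trans_le (min_le_dampedOscDenom hm hk ω)

theorem exists_one_add_sq_sq_le_dampedOscDenom (hm : 0 < m) (hb : 0 < b) (hk : 0 < k) :
    ∃ C, 0 ≤ C ∧ ∀ ω, (1 + ω ^ 2) ^ 2 ≤ C ^ 2 * dampedOscDenom m b k ω := by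
  set δ := min (k ^ 2 / 4) (b ^ 2 * k / (2 * m))
  have hδ : 0 < δ := lt_min (by positivity) (by positivity)
  refine ⟨√(2 / δ + 4 / m ^ 2 + 4 * k ^ 2 / (m ^ 2 * δ)), sqrt_nonneg _, fun ω => ?_⟩
  have hD : δ ≤ dampedOscDenom m b k ω := min_le_dampedOscDenom hm hk ω
  have hω4 : m ^ 2 * (ω ^ 2) ^ 2 ≤ 2 * dampedOscDenom m b k ω + 2 * k ^ 2 := by
    unfold dampedOscDenom
    nlinarith [sq_nonneg (k + (k - m * ω ^ 2)), sq_nonneg (b * ω)]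
  set D := dampedOscDenom m b k ω
  have hD1 : 1 ≤ D / δ := (one_le_div hδ).mpr hD
  have hk2 : k ^ 2 ≤ k ^ 2 * (D / δ) := le_mul_of_one_le_right (sq_nonneg k) hD1
  have hω4' : (ω ^ 2) ^ 2 ≤ (2 * D + 2 * (k ^ 2 * (D / δ))) / m ^ 2 := by
    rw [le_div_iff₀ (by positivity)]
    linarith
  rw [sq_sqrt (by positivity)]
  calc (1 + ω ^ 2) ^ 2 ≤ 2 * 1 + 2 * (ω ^ 2) ^ 2 := by nlinarith [sq_nonneg (1 - ω ^ 2)]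
    _ ≤ 2 * (D / δ) + 2 * ((2 * D + 2 * (k ^ 2 * (D / δ))) / m ^ 2) := by gcongr
    _ = (2 / δ + 4 / m ^ 2 + 4 * k ^ 2 / (m ^ 2 * δ)) * D := by ring

/-- The real part of `A e^{i(ω t + φ)} / (k - m ω² + i b ω)`. -/
noncomputable def sinusoidResponse (m b k A ω φ t : ℝ) : ℝ :=
  A / dampedOscDenom m b k ω * ((k - m * ω ^ 2) * cos (ω * t + φ) + b * ω * sin (ω * t + φ))

noncomputable def sinusoidResponseDeriv (m b k A ω φ t : ℝ) : ℝ :=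
  A / dampedOscDenom m b k ω *
    (ω * (b * ω * cos (ω * t + φ) - (k - m * ω ^ 2) * sin (ω * t + φ)))

variable {A ω φ : ℝ}

theorem hasDerivAt_const_mul_add (t : ℝ) : HasDerivAt (fun t => ω * t + φ) ω t := by
  simpa using ((hasDerivAt_id t).const_mul ω).add_const φ

theorem hasDerivAt_sinusoidResponse (t : ℝ) :
    HasDerivAt (sinusoidResponse m b k A ω φ) (sinusoidResponseDeriv m b k A ω φ t) t := by
  have hθ : HasDerivAt (fun t => ω * t + φ) ω t := hasDerivAt_const_mul_add t
  refine (((hθ.cos).const_mul (k - m * ω ^ 2)).add ((hθ.sin).const_mul (b * ω))).const_mul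
    (A / dampedOscDenom m b k ω) |>.congr_deriv ?_
  unfold sinusoidResponseDeriv
  ring

theorem hasDerivAt_sinusoidResponseDeriv (t : ℝ) :
    HasDerivAt (sinusoidResponseDeriv m b k A ω φ) (-ω ^ 2 * sinusoidResponse m b k A ω φ t) t := by
  have hθ : HasDerivAt (fun t => ω * t + φ) ω t := hasDerivAt_const_mul_add t
  refine ((((hθ.cos).const_mul (b * ω)).sub ((hθ.sin).const_mul (k - m * ω ^ 2))).const_mul
    ω).const_mul (A / dampedOscDenom m b k ω) |>.congr_deriv ?_
  unfold sinusoidResponse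
  ring

theorem sinusoidResponse_ode (hD : dampedOscDenom m b k ω ≠ 0) (t : ℝ) :
    m * (-ω ^ 2 * sinusoidResponse m b k A ω φ t) + b * sinusoidResponseDeriv m b k A ω φ t
      + k * sinusoidResponse m b k A ω φ t = A * cos (ω * t + φ) := by
  unfold sinusoidResponse sinusoidResponseDeriv
  field_simp
  unfold dampedOscDenom
  ring

theorem sq_mul_cos_add_mul_sin_le_dampedOscDenom (θ : ℝ) :
    ((k - m * ω ^ 2) * cos θ + b * ω * sin θ) ^ 2 ≤ dampedOscDenom m b k ω := by
  unfold dampedOscDenom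
  linear_combination sq_mul_cos_add_mul_sin_le (k - m * ω ^ 2) (b * ω) θ

section Bounds

variable {C : ℝ} (hD : 0 < dampedOscDenom m b k ω) (hC : 0 ≤ C)
  (hCD : (1 + ω ^ 2) ^ 2 ≤ C ^ 2 * dampedOscDenom m b k ω)
include hD hC hCD

theorem abs_sinusoidResponse_le (t : ℝ) : |sinusoidResponse m b k A ω φ t| ≤ C * |A| := by
  have h : sinusoidResponse m b k A ω φ t = A / dampedOscDenom m b k ω *
      (1 * ((k - m * ω ^ 2) * cos (ω * t + φ) + b * ω * sin (ω * t + φ))) := by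
    rw [one_mul]; rfl
  rw [h]
  exact abs_div_mul_mul_le hD hC (sq_mul_cos_add_mul_sin_le_dampedOscDenom _)
    (by nlinarith [sq_nonneg ω])

theorem abs_sinusoidResponseDeriv_le (t : ℝ) :
    |sinusoidResponseDeriv m b k A ω φ t| ≤ C * |A| := by
  have hS := sq_mul_cos_add_mul_sin_le (b * ω) (-(k - m * ω ^ 2)) (ω * t + φ)
  refine abs_div_mul_mul_le hD hC ?_ (by nlinarith [sq_nonneg ω])
  unfold dampedOscDenom
  linear_combination hS

theorem abs_neg_sq_mul_sinusoidResponse_le (t : ℝ) :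
    |-ω ^ 2 * sinusoidResponse m b k A ω φ t| ≤ C * |A| := by
  have h : -ω ^ 2 * sinusoidResponse m b k A ω φ t = A / dampedOscDenom m b k ω *
      (-ω ^ 2 * ((k - m * ω ^ 2) * cos (ω * t + φ) + b * ω * sin (ω * t + φ))) := by
    unfold sinusoidResponse; ring
  rw [h]
  exact abs_div_mul_mul_le hD hC (sq_mul_cos_add_mul_sin_le_dampedOscDenom _)
    (by nlinarith [sq_nonneg ω])

end Bounds

end DampedOsc

/-- Superposition: the steady-state response of the damped oscillator to a quasi-periodic
forcing (an absolutely convergent sum of sinusoids) is the corresponding termwise-transformed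
quasi-periodic series. -/
theorem damped_osc_quasiperiodic_particular_solution
    (m b k : ℝ) (hm : 0 < m) (hb : 0 < b) (hk : 0 < k)
    (A ω φ : ℕ → ℝ) (hA : Summable (fun j => |A j|))
    (g : ℝ → ℝ) (hg : g = fun t => ∑' j, A j * Real.cos (ω j * t + φ j))
    (P : ℝ → ℝ)
    (hP : P = fun t => ∑' j,
      (A j / ((k - m * (ω j) ^ 2) ^ 2 + b ^ 2 * (ω j) ^ 2)) *
        ((k - m * (ω j) ^ 2) * Real.cos (ω j * t + φ j)
          + b * (ω j) * Real.sin (ω j * t + φ j))) :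
    SolvesDampedOsc m b k g P := by
  obtain ⟨C, hC, hCD⟩ := exists_one_add_sq_sq_le_dampedOscDenom hm hb hk
  have hD (j : ℕ) := dampedOscDenom_pos hm hb hk (ω j)
  subst hg hP
  exact solvesDampedOsc_tsum (hA.mul_left C)
    (fun j => hasDerivAt_sinusoidResponse (A := A j) (φ := φ j))
    (fun j => hasDerivAt_sinusoidResponseDeriv (A := A j) (φ := φ j))
    (fun j => abs_sinusoidResponse_le (hD j) hC (hCD _))
    (fun j => abs_sinusoidResponseDeriv_le (hD j) hC (hCD _))
    (fun j => abs_neg_sq_mul_sinusoidResponse_le (hD j) hC (hCD _))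
    (fun j => sinusoidResponse_ode (hD j).ne')
end

section
/- Let n : ℕ and A, ω, φ : Fin n → ℝ, where the frequencies are nonnegative and pairwise distinct: 0 ≤ ω j for all j, and ω j ≠ ω j' for j ≠ j'. Define the trigonometric polynomial p : ℝ → ℝ by p t = ∑ j, A j * Real.cos (ω j * t + φ j). If Filter.Tendsto p Filter.atTop (nhds 0), then p t = 0 for all t : ℝ. In particular, two trigonometric polynomials with the stated frequency properties that are asymptotically equal are equal, so the quasi-periodic representative of an asymptotic equivalence class of trajectories is unique. -/
/-!
In the compact group `Circleⁿ`, the identity is a cluster point of the powers `xᵏ` of any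
element. Taking `x = (e^{iω_j})_j` shows that `p t` is a cluster point of the sequence
`p (t + k)`, `k ∈ ℕ`, which tends to `0`; hence `p t = 0`.
-/

open Filter Topology

theorem MapClusterPt.eq_of_tendsto {X α : Type*} [TopologicalSpace X] [T2Space X] {x y : X}
    {F : Filter α} {u : α → X} (hx : MapClusterPt x F u) (hy : Tendsto u F (𝓝 y)) : x = y := by
  by_contra hxy
  exact clusterPt_iff_not_disjoint.1 hx ((disjoint_nhds_nhds.2 hxy).mono_right hy)

theorem mapClusterPt_atTop_comp_mul_pow {G Y : Type*} [Group G] [TopologicalSpace G]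
    [CompactSpace G] [IsTopologicalGroup G] [TopologicalSpace Y] {g : G → Y}
    (hg : Continuous g) (x y : G) :
    MapClusterPt (g y) atTop (fun k : ℕ ↦ g (y * x ^ k)) := by
  simpa [Function.comp_def] using (mapClusterPt_one_atTop_pow x).continuousAt_comp
    (hg.comp (continuous_const_mul y)).continuousAt

theorem Circle.re_coe_exp (x : ℝ) : (Circle.exp x : ℂ).re = Real.cos x := by
  rw [Circle.coe_exp, Complex.exp_ofReal_mul_I_re]

theorem Real.mapClusterPt_atTop_sum_mul_cos {ι : Type*} [Fintype ι] (A ω φ : ι → ℝ) (t : ℝ) :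
    MapClusterPt (∑ j, A j * cos (ω j * t + φ j)) atTop
      (fun k : ℕ ↦ ∑ j, A j * cos (ω j * (t + k) + φ j)) := by
  have hg : Continuous fun θ : ι → Circle ↦ ∑ j, A j * (θ j : ℂ).re := by fun_prop
  convert mapClusterPt_atTop_comp_mul_pow hg (fun j ↦ Circle.exp (ω j))
    (fun j ↦ Circle.exp (ω j * t + φ j)) using 4 with k j
  · rw [Circle.re_coe_exp]
  · rw [Pi.mul_apply, Pi.pow_apply, ← Circle.exp_natCast_mul, ← Circle.exp_add,
      Circle.re_coe_exp]
    ring_nf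

theorem trig_poly_tendsto_zero_iff_zero_general
    (n : ℕ) (A ω φ : Fin n → ℝ)
    (p : ℝ → ℝ) (hp : p = fun t => ∑ j, A j * Real.cos (ω j * t + φ j))
    (hlim : Tendsto p atTop (nhds 0)) :
    ∀ t : ℝ, p t = 0 := by
  intro t
  subst hp
  exact (Real.mapClusterPt_atTop_sum_mul_cos A ω φ t).eq_of_tendsto
    (hlim.comp (tendsto_atTop_add_const_left _ t tendsto_natCast_atTop_atTop))

/-- A trigonometric polynomial with nonnegative, pairwise distinct frequencies that tends to
zero at infinity is identically zero.  Consequently the quasi-periodic representative of an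
asymptotic equivalence class of trajectories is unique. -/
theorem trig_poly_tendsto_zero_iff_zero
    (n : ℕ) (A ω φ : Fin n → ℝ)
    (hω : ∀ j, 0 ≤ ω j)
    (hdist : ∀ j j', j ≠ j' → ω j ≠ ω j')
    (p : ℝ → ℝ) (hp : p = fun t => ∑ j, A j * Real.cos (ω j * t + φ j))
    (hlim : Tendsto p atTop (nhds 0)) :
    ∀ t : ℝ, p t = 0 :=
  trig_poly_tendsto_zero_iff_zero_general n A ω φ p hp hlim
end
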